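/- arXiv:2105.14887 — 4 statements merged into one kernel-verified Lean document; each statement's English description precedes it below -/
import Mathlib

section
/- Let x⃗ and y⃗ be tuples of variables of equal length such that the variables in y⃗ are pairwise distinct and none of them occurs in x⃗. Then for every finite team S there exists a team T with S ⊆ T, |T| ≤ 2·|S|, and T ⊨ x⃗ ⊆ y⃗. -/
/-- `T ⊨ x⃗ ⊆ y⃗` for tuples `x y : Fin l → Var`: for every `t ∈ T` there is `t' ∈ T`
with `t(x⃗) = t'(y⃗)`. -/
def incSat {Var : Type*} (T : Set (Var → Bool)) {l : ℕ} (x y : Fin l → Var) : Prop :=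
  ∀ t ∈ T, ∃ t' ∈ T, ∀ i, t (x i) = t' (y i)

/-- if the variables of `y⃗` are pairwise distinct and none of them occurs
in `x⃗`, then every finite team `S` extends to a team `T ⊇ S` with `|T| ≤ 2·|S|` and
`T ⊨ x⃗ ⊆ y⃗`. -/
theorem extend_team_sat_inc {Var : Type*} {l : ℕ} (x y : Fin l → Var)
    (hy : Function.Injective y) (hxy : ∀ i j, y i ≠ x j)
    (S : Set (Var → Bool)) (hS : S.Finite) :
    ∃ T : Set (Var → Bool), S ⊆ T ∧ T.Finite ∧ T.ncard ≤ 2 * S.ncard ∧ incSat T x y := by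
  classical
  set f : (Var → Bool) → (Var → Bool) := fun s v =>
    if h : v ∈ Set.range y then s (x h.choose) else s v with hf
  have hfy : ∀ s i, f s (y i) = s (x i) := by
    intro s i
    have h : y i ∈ Set.range y := ⟨i, rfl⟩
    have : h.choose = i := hy h.choose_spec
    simp [hf, dif_pos h, this]
  have hfx : ∀ s j, f s (x j) = s (x j) := by
    intro s j
    have h : x j ∉ Set.range y := by
      rintro ⟨i, hi⟩; exact hxy i j hi
    simp only [hf]
    exact dif_neg h
  refine ⟨S ∪ f '' S, Set.subset_union_left, hS.union (hS.image f), ?_, ?_⟩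
  · calc (S ∪ f '' S).ncard ≤ S.ncard + (f '' S).ncard :=
          Set.ncard_union_le _ _
      _ ≤ S.ncard + S.ncard := by
          have := Set.ncard_image_le (f := f) hS
          omega
      _ = 2 * S.ncard := by ring
  · rintro t (ht | ⟨s, hs, rfl⟩)
    · exact ⟨f t, Or.inr ⟨t, ht, rfl⟩, fun i => (hfy t i).symm⟩
    · exact ⟨f s, Or.inr ⟨s, hs, rfl⟩, fun i => by rw [hfx, hfy]⟩
end

section
/- Let x⃗, y⃗ be tuples of variables with |x⃗| = |y⃗| = l, and let T be a finite nonempty team with T ⊨ x⃗ ⊆ y⃗. Then there exists a nonempty subteam T' ⊆ T with |T'| ≤ 2^l and T' ⊨ x⃗ ⊆ y⃗. -/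
/-- if a finite nonempty team `T` satisfies `x⃗ ⊆ y⃗` with `|x⃗| = |y⃗| = l`,
then some nonempty subteam `T' ⊆ T` with `|T'| ≤ 2^l` satisfies `x⃗ ⊆ y⃗`. -/
theorem small_subteam_sat_inc {Var : Type*} {l : ℕ} (x y : Fin l → Var)
    (T : Set (Var → Bool)) (hfin : T.Finite) (hne : T.Nonempty) (hsat : incSat T x y) :
    ∃ T' : Set (Var → Bool), T' ⊆ T ∧ T'.Nonempty ∧ T'.ncard ≤ 2 ^ l ∧ incSat T' x y := by
  classical
  -- A : set of x-value tuples of members of T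
  set A : Set (Fin l → Bool) := (fun t => fun i => t (x i)) '' T with hA
  -- choice function: for each tuple v, a team member matching v on y (if one exists)
  have hwit : ∀ v ∈ A, ∃ t' ∈ T, ∀ i, v i = t' (y i) := by
    rintro v ⟨t, htT, rfl⟩
    exact hsat t htT
  let c : (Fin l → Bool) → (Var → Bool) := fun v =>
    if h : ∃ t' ∈ T, ∀ i, v i = t' (y i) then h.choose else fun _ => false
  have hcT : ∀ v ∈ A, c v ∈ T ∧ ∀ i, v i = c v (y i) := by
    intro v hv
    have h := hwit v hv
    simp only [c, dif_pos h]
    exact ⟨h.choose_spec.1, h.choose_spec.2⟩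
  refine ⟨c '' A, ?_, ?_, ?_, ?_⟩
  · rintro _ ⟨v, hv, rfl⟩
    exact (hcT v hv).1
  · obtain ⟨t, htT⟩ := hne
    exact ⟨c (fun i => t (x i)), ⟨_, ⟨t, htT, rfl⟩, rfl⟩⟩
  · calc (c '' A).ncard ≤ A.ncard := Set.ncard_image_le (Set.toFinite A)
      _ ≤ (Set.univ : Set (Fin l → Bool)).ncard :=
          Set.ncard_le_ncard (Set.subset_univ A) (Set.toFinite _)
      _ = 2 ^ l := by
          rw [Set.ncard_univ, Nat.card_eq_fintype_card]
          simp [Fintype.card_fun]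
  · rintro _ ⟨v, hv, rfl⟩
    have hmem : (fun i => c v (x i)) ∈ A := ⟨c v, (hcT v hv).1, rfl⟩
    exact ⟨c (fun i => c v (x i)), ⟨_, hmem, rfl⟩, (hcT _ hmem).2⟩
end

section
/- Let S = {a_1,…,a_k} be a finite set and F = {B_1,…,B_n} a family of subsets of S with ⋃F = S. Introduce pairwise distinct propositional variables p_1,…,p_k, q_1,…,q_n, p_⊤, p_c, p_d, and for each index i ∈ {1,…,k} ∪ {c,d} define the assignment s_i by: s_i(p_i) = 1, s_i(p_⊤) = 1, s_i(q_j) = 1 iff i ∈ {1,…,k} and a_i ∈ B_j, and s_i(p) = 0 for every other variable p. Let T_F = {s_1,…,s_k,s_c,s_d} and let φ_F = (¬p_c ∧ ⋀_{j≤n} p_⊤ ⊆ q_j) ∨ (¬p_d ∧ ⋀_{j≤n} p_⊤ ⊆ q_j). Then T_F ⊨ φ_F under strict semantics if and only if there exist disjoint sets S_1, S_2 with S_1 ∪ S_2 = S such that B_j ∩ S_1 ≠ ∅ and B_j ∩ S_2 ≠ ∅ for every j ≤ n. -/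
/-- Formulas of propositional inclusion logic (PINC): PL extended with inclusion atoms. -/
inductive PINC (V : Type*) where
  | top : PINC V
  | bot : PINC V
  | var : V → PINC V
  | nvar : V → PINC V
  | inc : List V → List V → PINC V
  | and : PINC V → PINC V → PINC V
  | or : PINC V → PINC V → PINC V

/-- Strict team semantics for PINC: the split for ∨ must be disjoint. -/
def PINC.strictSat {V : Type*} : PINC V → Set (V → Bool) → Prop
  | .top, _ => True
  | .bot, T => T = ∅
  | .var x, T => ∀ t ∈ T, t x = true
  | .nvar x, T => ∀ t ∈ T, t x = false
  | .inc xs ys, T => ∀ t ∈ T, ∃ t' ∈ T, xs.map t = ys.map t'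
  | .and φ ψ, T => φ.strictSat T ∧ ψ.strictSat T
  | .or φ ψ, T => ∃ T₁ T₂ : Set (V → Bool),
      T₁ ∪ T₂ = T ∧ T₁ ∩ T₂ = ∅ ∧ φ.strictSat T₁ ∧ ψ.strictSat T₂

/-- Conjunction of a list of formulas. -/
def PINC.bigAnd {V : Type*} : List (PINC V) → PINC V
  | [] => .top
  | φ :: l => .and φ (PINC.bigAnd l)

lemma bigAnd_sat {V : Type*} (l : List (PINC V)) (T : Set (V → Bool)) :
    (PINC.bigAnd l).strictSat T ↔ ∀ ψ ∈ l, ψ.strictSat T := by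
  induction l with
  | nil => simp [PINC.bigAnd, PINC.strictSat]
  | cons φ l ih => simp [PINC.bigAnd, PINC.strictSat, ih]

/-- correctness of the reduction from the set splitting problem to strict
model checking for PINC. Here `S = {a 1, …, a k}` (with `a` injective), the family is
`B 1, …, B n ⊆ S` covering `S`; `p i, q j, p⊤, p_c, p_d` are pairwise distinct variables;
`s i` (for `i ≤ k`), `s_c`, `s_d` are the assignments from the reduction; `T_F` is the team
they form, and `φ_F = (¬p_c ∧ ⋀_j p⊤ ⊆ q_j) ∨ (¬p_d ∧ ⋀_j p⊤ ⊆ q_j)`.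
Then `T_F ⊨ φ_F` (strict semantics) iff `S` can be split into disjoint `S₁, S₂` such that
every `B j` meets both. -/
theorem set_splitting_reduction
    {α V : Type*} (k n : ℕ)
    (a : Fin k → α) (ha : Function.Injective a)
    (B : Fin n → Set α) (hBsub : ∀ j, B j ⊆ Set.range a)
    (hBcover : (⋃ j, B j) = Set.range a)
    (p : Fin k → V) (q : Fin n → V) (ptop pc pd : V)
    (hpinj : Function.Injective p) (hqinj : Function.Injective q)
    (hpq : ∀ i j, p i ≠ q j)
    (hp_new : ∀ i, p i ≠ ptop ∧ p i ≠ pc ∧ p i ≠ pd)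
    (hq_new : ∀ j, q j ≠ ptop ∧ q j ≠ pc ∧ q j ≠ pd)
    (hconst : ptop ≠ pc ∧ ptop ≠ pd ∧ pc ≠ pd)
    (s : Fin k → V → Bool)
    (hs : ∀ i v, s i v = true ↔ (v = p i ∨ v = ptop ∨ ∃ j, v = q j ∧ a i ∈ B j))
    (sc sd : V → Bool)
    (hsc : ∀ v, sc v = true ↔ (v = pc ∨ v = ptop))
    (hsd : ∀ v, sd v = true ↔ (v = pd ∨ v = ptop))
    (T : Set (V → Bool)) (hT : T = Set.range s ∪ {sc, sd})
    (φ : PINC V)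
    (hφ : φ = PINC.or
      (PINC.and (PINC.nvar pc)
        (PINC.bigAnd (List.ofFn fun j : Fin n => PINC.inc [ptop] [q j])))
      (PINC.and (PINC.nvar pd)
        (PINC.bigAnd (List.ofFn fun j : Fin n => PINC.inc [ptop] [q j])))) :
    φ.strictSat T ↔
      ∃ S₁ S₂ : Set α, S₁ ∩ S₂ = ∅ ∧ S₁ ∪ S₂ = Set.range a ∧
        ∀ j, (B j ∩ S₁).Nonempty ∧ (B j ∩ S₂).Nonempty := by
  -- basic value facts
  have hsptop : ∀ i, s i ptop = true := fun i => (hs i ptop).mpr (Or.inr (Or.inl rfl))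
  have hspi : ∀ i, s i (p i) = true := fun i => (hs i (p i)).mpr (Or.inl rfl)
  have hsq : ∀ i j, (s i (q j) = true ↔ a i ∈ B j) := by
    intro i j
    rw [hs]
    constructor
    · rintro (h | h | ⟨j', hj', hm⟩)
      · exact absurd h.symm (hpq i j)
      · exact absurd h (hq_new j).1
      · rwa [hqinj hj']
    · intro h; exact Or.inr (Or.inr ⟨j, rfl, h⟩)
  have hspc : ∀ i, s i pc = false := by
    intro i
    rw [Bool.eq_false_iff, Ne, hs]
    rintro (h | h | ⟨j, hj, _⟩)
    · exact (hp_new i).2.1 h.symm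
    · exact hconst.1 h.symm
    · exact (hq_new j).2.1 hj.symm
  have hspd : ∀ i, s i pd = false := by
    intro i
    rw [Bool.eq_false_iff, Ne, hs]
    rintro (h | h | ⟨j, hj, _⟩)
    · exact (hp_new i).2.2 h.symm
    · exact hconst.2.1 h.symm
    · exact (hq_new j).2.2 hj.symm
  have hscptop : sc ptop = true := (hsc ptop).mpr (Or.inr rfl)
  have hsdptop : sd ptop = true := (hsd ptop).mpr (Or.inr rfl)
  have hscpc : sc pc = true := (hsc pc).mpr (Or.inl rfl)
  have hsdpd : sd pd = true := (hsd pd).mpr (Or.inl rfl)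
  have hscpd : sc pd = false := by
    rw [Bool.eq_false_iff, Ne, hsc]
    rintro (h | h)
    · exact hconst.2.2 h.symm
    · exact hconst.2.1 h.symm
  have hsdpc : sd pc = false := by
    rw [Bool.eq_false_iff, Ne, hsd]
    rintro (h | h)
    · exact hconst.2.2 h
    · exact hconst.1 h.symm
  have hscq : ∀ j, sc (q j) = false := by
    intro j
    rw [Bool.eq_false_iff, Ne, hsc]
    rintro (h | h)
    · exact (hq_new j).2.1 h
    · exact (hq_new j).1 h
  have hsdq : ∀ j, sd (q j) = false := by
    intro j
    rw [Bool.eq_false_iff, Ne, hsd]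
    rintro (h | h)
    · exact (hq_new j).2.2 h
    · exact (hq_new j).1 h
  have hsinj : Function.Injective s := by
    intro i i' h
    have h2 : s i (p i') = true := by rw [h]; exact hspi i'
    rcases (hs i (p i')).mp h2 with h1 | h1 | ⟨j, hj, _⟩
    · exact (hpinj h1).symm
    · exact absurd h1 (hp_new i').1
    · exact absurd hj (hpq i' j)
  have hssc : ∀ i, s i ≠ sc := by
    intro i h
    have h2 : sc (p i) = true := by rw [← h]; exact hspi i
    rcases (hsc (p i)).mp h2 with h1 | h1
    · exact (hp_new i).2.1 h1
    · exact (hp_new i).1 h1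
  have hssd : ∀ i, s i ≠ sd := by
    intro i h
    have h2 : sd (p i) = true := by rw [← h]; exact hspi i
    rcases (hsd (p i)).mp h2 with h1 | h1
    · exact (hp_new i).2.2 h1
    · exact (hp_new i).1 h1
  have hscsd : sc ≠ sd := by
    intro h
    rw [h] at hscpc
    rw [hsdpc] at hscpc
    exact Bool.false_ne_true hscpc
  have hmemT : ∀ t, t ∈ T ↔ ((∃ i, t = s i) ∨ t = sc ∨ t = sd) := by
    intro t
    rw [hT]
    simp only [Set.mem_union, Set.mem_range, Set.mem_insert_iff, Set.mem_singleton_iff]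
    tauto
  subst hφ
  simp only [PINC.strictSat]
  constructor
  · rintro ⟨T₁, T₂, hun, hdis, ⟨hc1, hi1⟩, ⟨hd2, hi2⟩⟩
    rw [bigAnd_sat] at hi1 hi2
    simp only [List.mem_ofFn] at hi1 hi2
    have hi1' : ∀ j, ∀ t ∈ T₁, ∃ t' ∈ T₁, t ptop = t' (q j) := by
      intro j t ht
      obtain ⟨t', ht', heq⟩ := hi1 _ ⟨j, rfl⟩ t ht
      simp only [List.map, List.cons.injEq] at heq
      exact ⟨t', ht', heq.1⟩
    have hi2' : ∀ j, ∀ t ∈ T₂, ∃ t' ∈ T₂, t ptop = t' (q j) := by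
      intro j t ht
      obtain ⟨t', ht', heq⟩ := hi2 _ ⟨j, rfl⟩ t ht
      simp only [List.map, List.cons.injEq] at heq
      exact ⟨t', ht', heq.1⟩
    have hsdT : sd ∈ T := (hmemT sd).mpr (Or.inr (Or.inr rfl))
    have hscT : sc ∈ T := (hmemT sc).mpr (Or.inr (Or.inl rfl))
    have hsdT1 : sd ∈ T₁ := by
      rcases (hun ▸ hsdT : sd ∈ T₁ ∪ T₂) with h | h
      · exact h
      · have := hd2 sd h
        rw [hsdpd] at this
        exact absurd this (by simp)
    have hscT2 : sc ∈ T₂ := by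
      rcases (hun ▸ hscT : sc ∈ T₁ ∪ T₂) with h | h
      · have := hc1 sc h
        rw [hscpc] at this
        exact absurd this (by simp)
      · exact h
    refine ⟨{x | ∃ i, a i = x ∧ s i ∈ T₁}, {x | ∃ i, a i = x ∧ s i ∈ T₂}, ?_, ?_, ?_⟩
    · ext x
      simp only [Set.mem_inter_iff, Set.mem_setOf_eq, Set.mem_empty_iff_false, iff_false]
      rintro ⟨⟨i, rfl, h1⟩, ⟨i', he, h2⟩⟩
      have : i' = i := ha he
      subst this
      have : s i' ∈ T₁ ∩ T₂ := ⟨h1, h2⟩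
      rw [hdis] at this
      exact this
    · ext x
      simp only [Set.mem_union, Set.mem_setOf_eq, Set.mem_range]
      constructor
      · rintro (⟨i, rfl, _⟩ | ⟨i, rfl, _⟩) <;> exact ⟨i, rfl⟩
      · rintro ⟨i, rfl⟩
        have : s i ∈ T := (hmemT (s i)).mpr (Or.inl ⟨i, rfl⟩)
        rcases (hun ▸ this : s i ∈ T₁ ∪ T₂) with h | h
        · exact Or.inl ⟨i, rfl, h⟩
        · exact Or.inr ⟨i, rfl, h⟩
    · intro j
      constructor
      · obtain ⟨t', ht', heq⟩ := hi1' j sd hsdT1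
        rw [hsdptop] at heq
        have ht'T : t' ∈ T := hun ▸ Or.inl ht'
        rcases (hmemT t').mp ht'T with ⟨i, rfl⟩ | rfl | rfl
        · exact ⟨a i, (hsq i j).mp heq.symm, ⟨i, rfl, ht'⟩⟩
        · rw [hscq j] at heq; exact absurd heq (by simp)
        · rw [hsdq j] at heq; exact absurd heq (by simp)
      · obtain ⟨t', ht', heq⟩ := hi2' j sc hscT2
        rw [hscptop] at heq
        have ht'T : t' ∈ T := hun ▸ Or.inr ht'
        rcases (hmemT t').mp ht'T with ⟨i, rfl⟩ | rfl | rfl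
        · exact ⟨a i, (hsq i j).mp heq.symm, ⟨i, rfl, ht'⟩⟩
        · rw [hscq j] at heq; exact absurd heq (by simp)
        · rw [hsdq j] at heq; exact absurd heq (by simp)
  · rintro ⟨S₁, S₂, hdis, hun, hmeet⟩
    refine ⟨{t | ∃ i, t = s i ∧ a i ∈ S₁} ∪ {sd}, {t | ∃ i, t = s i ∧ a i ∈ S₂} ∪ {sc},
      ?_, ?_, ⟨?_, ?_⟩, ⟨?_, ?_⟩⟩
    · ext t
      simp only [Set.mem_union, Set.mem_setOf_eq, Set.mem_singleton_iff, hmemT]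
      constructor
      · rintro ((⟨i, rfl, _⟩ | rfl) | (⟨i, rfl, _⟩ | rfl))
        · exact Or.inl ⟨i, rfl⟩
        · exact Or.inr (Or.inr rfl)
        · exact Or.inl ⟨i, rfl⟩
        · exact Or.inr (Or.inl rfl)
      · rintro (⟨i, rfl⟩ | rfl | rfl)
        · have : a i ∈ S₁ ∪ S₂ := hun ▸ ⟨i, rfl⟩
          rcases this with h | h
          · exact Or.inl (Or.inl ⟨i, rfl, h⟩)
          · exact Or.inr (Or.inl ⟨i, rfl, h⟩)
        · exact Or.inr (Or.inr rfl)
        · exact Or.inl (Or.inr rfl)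
    · ext t
      simp only [Set.mem_inter_iff, Set.mem_union, Set.mem_setOf_eq, Set.mem_singleton_iff,
        Set.mem_empty_iff_false, iff_false]
      rintro ⟨(⟨i, rfl, h1⟩ | rfl), (⟨i', he, h2⟩ | he)⟩
      · have : i = i' := hsinj he
        subst this
        have : a i ∈ S₁ ∩ S₂ := ⟨h1, h2⟩
        rw [hdis] at this
        exact this
      · exact hssc i he
      · exact hssd i' he.symm
      · exact hscsd he.symm
    · rintro t ((⟨i, rfl, _⟩ | rfl))
      · exact hspc i
      · exact hsdpc
    · rw [bigAnd_sat]
      simp only [List.mem_ofFn]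
      rintro ψ ⟨j, rfl⟩ t ht
      obtain ⟨x, hxB, hxS⟩ := (hmeet j).1
      obtain ⟨i, rfl⟩ := hBsub j hxB
      refine ⟨s i, Or.inl ⟨i, rfl, hxS⟩, ?_⟩
      have h1 : t ptop = true := by
        rcases ht with ⟨i', rfl, _⟩ | rfl
        · exact hsptop i'
        · exact hsdptop
      simp only [List.map, h1, (hsq i j).mpr hxB]
    · rintro t ((⟨i, rfl, _⟩ | rfl))
      · exact hspd i
      · exact hscpd
    · rw [bigAnd_sat]
      simp only [List.mem_ofFn]
      rintro ψ ⟨j, rfl⟩ t ht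
      obtain ⟨x, hxB, hxS⟩ := (hmeet j).2
      obtain ⟨i, rfl⟩ := hBsub j hxB
      refine ⟨s i, Or.inl ⟨i, rfl, hxS⟩, ?_⟩
      have h1 : t ptop = true := by
        rcases ht with ⟨i', rfl, _⟩ | rfl
        · exact hsptop i'
        · exact hscptop
      simp only [List.map, h1, (hsq i j).mpr hxB]
end

section
/- Let T be a team and x, y variables such that t(x) = 1 and t(y) = 0 for every t ∈ T. Suppose there are inclusion atoms x⃗_0 ⊆ y⃗_0, …, x⃗_{n-1} ⊆ y⃗_{n-1}, each satisfied by T, together with variables z_0 = x, z_1, …, z_n = y and positions i_0,…,i_{n-1} such that for each j < n the variable z_j is the i_j-th component of y⃗_j and z_{j+1} is the i_j-th component of x⃗_j. Then T = ∅. -/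
/-- if every `t ∈ T` has `t(x) = 1` and `t(y) = 0`, and there is a chain of
inclusion atoms `X j ⊆ Y j` (each satisfied by `T`) linking `x = z 0` to `y = z n`, where
`z j` is the `idx j`-th component of `Y j` and `z (j+1)` is the `idx j`-th component of
`X j`, then `T = ∅`. -/
theorem inc_chain_contradiction {Var : Type*} (T : Set (Var → Bool)) (x y : Var)
    (hx : ∀ t ∈ T, t x = true) (hy : ∀ t ∈ T, t y = false)
    (n : ℕ) (l : Fin n → ℕ)
    (X Y : (j : Fin n) → Fin (l j) → Var)
    (hsat : ∀ j, incSat T (X j) (Y j))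
    (z : Fin (n + 1) → Var) (hz0 : z 0 = x) (hzn : z (Fin.last n) = y)
    (idx : (j : Fin n) → Fin (l j))
    (hY : ∀ j : Fin n, z j.castSucc = Y j (idx j))
    (hX : ∀ j : Fin n, z j.succ = X j (idx j)) :
    T = ∅ := by
  by_contra h
  obtain ⟨t0, ht0⟩ := Set.nonempty_iff_ne_empty.mpr h
  have key : ∀ j : Fin (n + 1), ∃ t ∈ T, t (z j) = false := by
    intro j
    induction j using Fin.reverseInduction with
    | last => exact ⟨t0, ht0, hzn ▸ hy t0 ht0⟩
    | cast j ih =>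
      obtain ⟨t, htT, htf⟩ := ih
      obtain ⟨t', ht'T, ht'⟩ := hsat j t htT
      exact ⟨t', ht'T, by rw [hY j, ← ht' (idx j), ← hX j]; exact htf⟩
  obtain ⟨t, htT, htf⟩ := key 0
  rw [hz0] at htf
  simp [hx t htT] at htf
end
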